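/- For n ≥ 3 and H(φ) = (n−2)/2 + (1/2)[(n−1)cos φ − cos((n−1)φ)], one has H(π/n) > H(π/(n−1)). -/

import Mathlib

open Real

/-! With `g x = x * cos (π / x)`, both cosines of multiples collapse at the two boundary points
(`cos ((n - 1) π / n) = - cos (π / n)` and `cos π = -1`), so that
`H (π / n) - H (π / (n - 1)) = (g n - g (n - 1) - 1) / 2`.
With `t = π / x`, `g' x = cos t + t sin t`, and `cos t ≥ 1 - t² / 2` together with Jordan's
inequality `sin t ≥ 2 t / π` give `g' x > 1` for `x > 2`; hence `g x - x` is strictly increasing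
on `[2, ∞)`. -/

lemma one_lt_cos_add_mul_sin {t : ℝ} (ht₀ : 0 < t) (ht : t ≤ π / 2) :
    1 < cos t + t * sin t := by
  have hcos := one_sub_sq_div_two_le_cos (x := t)
  have hsin := mul_le_sin ht₀.le ht
  have hjordan : t / 2 < 2 / π * t := by
    rw [div_mul_eq_mul_div, lt_div_iff₀ pi_pos]
    nlinarith [pi_lt_four]
  nlinarith [mul_lt_mul_of_pos_left hjordan ht₀]

lemma hasDerivAt_mul_cos_pi_div {x : ℝ} (hx : x ≠ 0) :
    HasDerivAt (fun y => y * cos (π / y)) (cos (π / x) + π / x * sin (π / x)) x := by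
  have hinner : HasDerivAt (fun y => π / y) (-(π / x ^ 2)) x := by
    simpa [div_eq_mul_inv] using (hasDerivAt_inv hx).const_mul π
  refine ((hasDerivAt_id' x).fun_mul hinner.cos).congr_deriv ?_
  field_simp

lemma strictMonoOn_mul_cos_pi_div_sub_self :
    StrictMonoOn (fun x => x * cos (π / x) - x) (Set.Ici 2) := by
  have hderiv {x : ℝ} (hx : 2 ≤ x) := (hasDerivAt_mul_cos_pi_div (by linarith : x ≠ 0)).fun_sub
    (hasDerivAt_id' x)
  refine strictMonoOn_of_deriv_pos (convex_Ici 2)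
    (fun x hx => (hderiv hx).continuousAt.continuousWithinAt) fun x hx => ?_
  rw [interior_Ici, Set.mem_Ioi] at hx
  have hx₀ : 0 < x := by linarith
  rw [(hderiv hx.le).deriv, sub_pos]
  refine one_lt_cos_add_mul_sin (by positivity) ?_
  rw [div_le_div_iff₀ hx₀ two_pos]
  nlinarith [pi_pos]

theorem H_boundary_comparison
    (n : ℕ) (hn : 3 ≤ n)
    (H : ℝ → ℝ)
    (hH : H = fun φ => (n - 2) / 2 + (1 / 2) * ((n - 1) * cos φ - cos ((n - 1) * φ))) :
    H (π / n) > H (π / (n - 1)) := by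
  subst hH
  have hn' : (3 : ℝ) ≤ n := by exact_mod_cast hn
  have hcos_n : cos ((n - 1) * (π / n)) = -cos (π / n) := by
    rw [show ((n : ℝ) - 1) * (π / n) = π - π / n by field_simp, cos_pi_sub]
  have hcos_pred : cos ((n - 1) * (π / (n - 1))) = -1 := by
    rw [mul_div_cancel₀ _ (by linarith : (n : ℝ) - 1 ≠ 0), cos_pi]
  have hmono := strictMonoOn_mul_cos_pi_div_sub_self
    (Set.mem_Ici.mpr (by linarith : (2 : ℝ) ≤ n - 1)) (Set.mem_Ici.mpr (by linarith : (2 : ℝ) ≤ n))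
    (by linarith : (n : ℝ) - 1 < n)
  simp only at hmono ⊢
  rw [hcos_n, hcos_pred]
  linarith
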